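/- Let G = ℝ^d ⋊ K with K a compact group acting linearly on ℝ^d. Every compact subgroup of G is conjugate, by an element of ℝ^d, to a subgroup of {0} × K; in particular the maximal compact subgroups of G are precisely the conjugates of {0} × K. -/

import Mathlib

/-- The semidirect product `V ⋊ K` of a real vector space `V` by a group `K`
acting linearly via a representation `ρ`, with multiplication
`(v, k)(w, l) = (v + ρ k w, k l)`. -/
@[ext] structure SDP {V K : Type*} [AddCommGroup V] [Module ℝ V] [Group K]
    (ρ : Representation ℝ K V) where
  fst : V
  snd : K

namespace SDP

variable {V K : Type*} [AddCommGroup V] [Module ℝ V] [Group K]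
  {ρ : Representation ℝ K V}

instance : Mul (SDP ρ) := ⟨fun a b => ⟨a.fst + ρ a.snd b.fst, a.snd * b.snd⟩⟩
instance : One (SDP ρ) := ⟨⟨0, 1⟩⟩
instance : Inv (SDP ρ) := ⟨fun a => ⟨-(ρ a.snd⁻¹ a.fst), a.snd⁻¹⟩⟩

@[simp] theorem mul_fst (a b : SDP ρ) : (a * b).fst = a.fst + ρ a.snd b.fst := rfl
@[simp] theorem mul_snd (a b : SDP ρ) : (a * b).snd = a.snd * b.snd := rfl
@[simp] theorem one_fst : (1 : SDP ρ).fst = 0 := rfl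
@[simp] theorem one_snd : (1 : SDP ρ).snd = 1 := rfl
@[simp] theorem inv_fst (a : SDP ρ) : (a⁻¹).fst = -(ρ a.snd⁻¹ a.fst) := rfl
@[simp] theorem inv_snd (a : SDP ρ) : (a⁻¹).snd = a.snd⁻¹ := rfl

instance : Group (SDP ρ) where
  mul_assoc a b c := by
    ext <;> simp [map_mul, Module.End.mul_apply, add_assoc, mul_assoc]
  one_mul a := by ext <;> simp
  mul_one a := by ext <;> simp
  inv_mul_cancel a := by
    ext <;> simp [← map_mul, ← Module.End.mul_apply]

/-- The product topology on `V ⋊ K`. -/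
instance [TopologicalSpace V] [TopologicalSpace K] : TopologicalSpace (SDP ρ) :=
  TopologicalSpace.induced (fun a => (a.fst, a.snd)) inferInstance

/-- The canonical copy `{0} × K` of `K` inside `V ⋊ K`. -/
def core (ρ : Representation ℝ K V) : Subgroup (SDP ρ) where
  carrier := {a | a.fst = 0}
  mul_mem' := by intro a b ha hb; simp_all [Set.mem_setOf_eq]
  one_mem' := rfl
  inv_mem' := by intro a ha; simp_all [Set.mem_setOf_eq]

end SDP

/-- An element of a topological group is *elliptic* if the closure of the
cyclic subgroup it generates is compact. -/
def IsElliptic {G : Type*} [Group G] [TopologicalSpace G] (g : G) : Prop :=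
  IsCompact (closure (Subgroup.zpowers g : Set G))

/-! The translation parts `c ↦ c.fst` of a compact subgroup `C` form a continuous 1-cocycle
of `C` for its action on `V` through `K`. Averaging this cocycle over the Haar probability
measure of `C` yields `v` with `c.fst = ρ c.snd v - v` for all `c ∈ C`, which says precisely that
conjugation by `(v, 1)` moves `C` into `{0} × K`. -/

open MeasureTheory Topology

namespace Representation

variable {G V : Type*} [Group G] [TopologicalSpace G] [IsTopologicalGroup G] [CompactSpace G]
  [NormedAddCommGroup V] [NormedSpace ℝ V] [FiniteDimensional ℝ V]

theorem exists_coboundary_of_compactSpace (ρ : Representation ℝ G V) {f : G → V}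
    (hf : Continuous f) (hcocycle : ∀ g h, f (g * h) = f g + ρ g (f h)) :
    ∃ v : V, ∀ g, f g = ρ g v - v := by
  borelize G
  let μ : Measure G := Measure.haarMeasure ⊤
  have : IsProbabilityMeasure μ := ⟨by
    simpa using Measure.haarMeasure_self (K₀ := (⊤ : TopologicalSpace.PositiveCompacts G))⟩
  have hfint : Integrable f μ :=
    hf.integrable_of_hasCompactSupport (HasCompactSupport.of_compactSpace f)
  refine ⟨-∫ x, f x ∂μ, fun g => ?_⟩
  let L : V →L[ℝ] V := LinearMap.toContinuousLinearMap (ρ g)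
  have hmean : ∫ x, f x ∂μ = f g + ρ g (∫ x, f x ∂μ) := calc
    ∫ x, f x ∂μ = ∫ x, f (g * x) ∂μ := (integral_mul_left_eq_self f g).symm
    _ = ∫ x, (f g + L (f x)) ∂μ := by simp only [hcocycle]; rfl
    _ = f g + ρ g (∫ x, f x ∂μ) := by
      rw [integral_add (integrable_const _) (L.integrable_comp hfint), integral_const,
        L.integral_comp_comm hfint, probReal_univ, one_smul]; rfl
  rw [map_neg, neg_sub_neg, eq_sub_iff_add_eq, ← hmean]

end Representation

namespace SDP

variable {V K : Type*} [AddCommGroup V] [Module ℝ V] [Group K] {ρ : Representation ℝ K V}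

theorem mem_core {a : SDP ρ} : a ∈ core ρ ↔ a.fst = 0 := Iff.rfl

def sndHom : SDP ρ →* K where
  toFun := snd
  map_one' := rfl
  map_mul' _ _ := rfl

theorem conj_fst (v : V) (a : SDP ρ) :
    ((⟨v, 1⟩ : SDP ρ) * a * (⟨v, 1⟩ : SDP ρ)⁻¹).fst = v + a.fst - ρ a.snd v := by
  simp [sub_eq_add_neg, add_assoc]

theorem conj_mem_core_iff {v : V} {a : SDP ρ} :
    (⟨v, 1⟩ : SDP ρ) * a * (⟨v, 1⟩ : SDP ρ)⁻¹ ∈ core ρ ↔ a.fst = ρ a.snd v - v := by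
  rw [mem_core, conj_fst, ← sub_eq_zero (a := a.fst)]
  exact iff_of_eq (congrArg (· = 0) (by abel))

variable [TopologicalSpace V] [TopologicalSpace K]

theorem isInducing_fst_snd : IsInducing fun a : SDP ρ => (a.fst, a.snd) := ⟨rfl⟩

theorem continuous_fst : Continuous fun a : SDP ρ => a.fst :=
  _root_.continuous_fst.comp isInducing_fst_snd.continuous

theorem continuous_snd : Continuous fun a : SDP ρ => a.snd :=
  _root_.continuous_snd.comp isInducing_fst_snd.continuous

theorem isTopologicalGroup [IsTopologicalAddGroup V] [IsTopologicalGroup K]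
    (hρ : Continuous fun p : K × V => ρ p.1 p.2) : IsTopologicalGroup (SDP ρ) where
  continuous_mul := continuous_induced_rng.2 <|
    ((continuous_fst.comp _root_.continuous_fst).add
      (hρ.comp ((continuous_snd.comp _root_.continuous_fst).prodMk
        (continuous_fst.comp _root_.continuous_snd)))).prodMk
      ((continuous_snd.comp _root_.continuous_fst).mul (continuous_snd.comp _root_.continuous_snd))
  continuous_inv := continuous_induced_rng.2 <|
    (hρ.comp (continuous_snd.inv.prodMk continuous_fst)).neg.prodMk continuous_snd.inv

theorem isCompact_core [CompactSpace K] : IsCompact (core ρ : Set (SDP ρ)) := by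
  have : (fun a : SDP ρ => (a.fst, a.snd)) '' core ρ = {0} ×ˢ Set.univ := by
    ext ⟨v, k⟩
    exact ⟨fun ⟨_, ha, h⟩ => h ▸ ⟨ha, trivial⟩, fun ⟨hv, _⟩ => ⟨⟨v, k⟩, hv, rfl⟩⟩
  rw [isInducing_fst_snd.isCompact_iff, this]
  exact isCompact_singleton.prod isCompact_univ

end SDP

/-- Let `G = ℝ^d ⋊ K` with `K` a compact group acting linearly and
continuously on the finite-dimensional real vector space `V = ℝ^d`.  Every
compact subgroup of `G` is conjugate, by an element of `V`, to a subgroup of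
`{0} × K`; and `{0} × K` itself is compact, so the maximal compact subgroups
of `G` are precisely the conjugates of `{0} × K`. -/
theorem compact_subgroup_conj_into_core {V K : Type*} [NormedAddCommGroup V]
    [NormedSpace ℝ V] [FiniteDimensional ℝ V] [Group K] [TopologicalSpace K]
    [IsTopologicalGroup K] [CompactSpace K] (ρ : Representation ℝ K V)
    (hcont : Continuous fun p : K × V => ρ p.1 p.2) :
    IsCompact ((SDP.core ρ : Subgroup (SDP ρ)) : Set (SDP ρ)) ∧
      ∀ C : Subgroup (SDP ρ), IsCompact (C : Set (SDP ρ)) →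
        ∃ v : V, ∀ c ∈ C,
          ((⟨v, 1⟩ : SDP ρ) * c * (⟨v, 1⟩ : SDP ρ)⁻¹) ∈ SDP.core ρ := by
  have := SDP.isTopologicalGroup hcont
  refine ⟨SDP.isCompact_core, fun C hC => ?_⟩
  have : CompactSpace C := isCompact_iff_compactSpace.1 hC
  obtain ⟨v, hv⟩ := Representation.exists_coboundary_of_compactSpace
    (ρ.comp (SDP.sndHom.comp C.subtype)) (f := fun c : C => (c : SDP ρ).fst)
    (SDP.continuous_fst.comp continuous_subtype_val) fun _ _ => rfl
  exact ⟨v, fun c hc => SDP.conj_mem_core_iff.2 (hv ⟨c, hc⟩)⟩
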